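/- With f as above, on the unit circle one has |f(z)| ≤ C·(1/(kε) + log k + 1) for an absolute constant C > 0. -/

import Mathlib

/-!
Write `z = exp (2πi (n + t) / k)` with `n ∈ ℤ` and `|t| ≤ 1/2`. The `j`-th summand of `f(z)` is
`P (exp (2πi (n - j + t) / k))` with `P w = (1 + ε) / (1 + ε - w)`, and its dependence on `n - j`
is `k`-periodic, so `f(z) = (1/k) ∑_{j<k} P (exp (2πi (j + t) / k))`.
On the unit circle `|1 + ε - w| ≥ max ε |1 - w|`, and by Jordan's inequality
`|1 - exp (2πi x)| = 2 |sin πx| ≥ 4 |x - round x|`. Hence the term `j = 0` is at most `2/ε` and the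
term `j ∈ [1, k)` at most `k/j + k/(k-j)`, since `|t| ≤ 1/2` keeps `(j + t)/k` at distance at least
`min j (k - j) / (2k)` from `ℤ`. Summing gives `|f(z)| ≤ 2/(kε) + 2 (1 + log k)`.
-/

open Real Complex

/-- The Kahane–Katznelson function built from the `k`-th roots of unity. -/
noncomputable def KKfun (k : ℕ) (ε : ℝ) (z : ℂ) : ℂ :=
  (1 / k) * ∑ j ∈ Finset.range k,
    (1 + (ε:ℂ)) / (1 + (ε:ℂ) - (starRingEnd ℂ) (Complex.exp (2 * π * Complex.I * j / k)) * z)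

open Finset

namespace Function.Periodic

variable {M : Type*} [AddCommGroup M] {h : ℤ → M} {k : ℕ}

theorem sum_range_add_one (hh : Periodic h k) (n : ℤ) :
    ∑ j ∈ range k, h (n + 1 + j) = ∑ j ∈ range k, h (n + j) := by
  have h₁ := sum_range_succ (fun j : ℕ => h (n + j)) k
  have h₂ := sum_range_succ' (fun j : ℕ => h (n + j)) k
  rw [h₁, hh n] at h₂
  simpa [add_assoc, add_comm (1 : ℤ)] using h₂.symm

theorem sum_range_add (hh : Periodic h k) (n : ℤ) :
    ∑ j ∈ range k, h (n + j) = ∑ j ∈ range k, h j := by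
  induction n using Int.induction_on with
  | zero => simp
  | succ n ih => rw [hh.sum_range_add_one, ih]
  | pred n ih => rw [← ih, ← hh.sum_range_add_one, sub_add_cancel]

theorem sum_range_sub (hh : Periodic h k) (n : ℤ) :
    ∑ j ∈ range k, h (n - j) = ∑ j ∈ range k, h j := by
  rw [← sum_range_reflect, ← hh.sum_range_add (n + 1 - k)]
  refine sum_congr rfl fun j hj => ?_
  have hcast : ((k - 1 - j : ℕ) : ℤ) = k - 1 - j := by have := mem_range.mp hj; omega
  rw [hcast]
  ring_nf

end Function.Periodic

theorem norm_exp_two_pi_I_mul (x : ℝ) : ‖exp (2 * π * I * x)‖ = 1 := by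
  rw [show 2 * π * I * x = ((2 * π * x : ℝ) : ℂ) * I by push_cast; ring, norm_exp_ofReal_mul_I]

theorem two_mul_abs_sub_round_le_abs_sin (x : ℝ) : 2 * |x - round x| ≤ |Real.sin (π * x)| := by
  have hsin : |Real.sin (π * x)| = |Real.sin (π * (x - round x))| := by
    rw [mul_sub, mul_comm π (round x : ℝ), sin_sub_int_mul_pi, abs_mul, abs_neg_one_zpow, one_mul]
  have hx : |π * (x - round x)| ≤ π / 2 := by
    rw [abs_mul, abs_of_pos pi_pos]
    nlinarith [abs_sub_round x, pi_pos]
  have := mul_abs_le_abs_sin hx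
  rw [abs_mul, abs_of_pos pi_pos, ← mul_assoc, div_mul_cancel₀ _ pi_ne_zero] at this
  rwa [hsin]

theorem four_mul_abs_sub_round_le_norm_one_sub_exp (x : ℝ) :
    4 * |x - round x| ≤ ‖1 - exp (2 * π * I * x)‖ := by
  have h := norm_exp_I_mul_ofReal_sub_one (2 * π * x)
  rw [norm_sub_rev, show 2 * π * I * x = I * ((2 * π * x : ℝ) : ℂ) by push_cast; ring, h,
    Real.norm_eq_abs, abs_mul, abs_two, show 2 * π * x / 2 = π * x by ring]
  linarith [two_mul_abs_sub_round_le_abs_sin x]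

theorem exists_eq_exp_two_pi_I_mul_div {z : ℂ} (hz : ‖z‖ = 1) {k : ℕ} (hk : k ≠ 0) :
    ∃ n : ℤ, ∃ t : ℝ, |t| ≤ 1 / 2 ∧ z = exp (2 * π * I * ((n + t) / k)) := by
  set u := k * arg z / (2 * π)
  refine ⟨round u, u - round u, abs_sub_round u, ?_⟩
  conv_lhs => rw [← norm_mul_exp_arg_mul_I z, hz, ofReal_one, one_mul]
  congr 1
  simp only [u]
  push_cast
  field_simp
  ring

theorem KKfun_exp_eq {k : ℕ} (hk : k ≠ 0) (ε t : ℝ) (n : ℤ) :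
    KKfun k ε (exp (2 * π * I * ((n + t) / k))) =
      (1 / k) * ∑ j ∈ range k, (1 + (ε : ℂ)) / (1 + ε - exp (2 * π * I * ((j + t) / k))) := by
  set h : ℤ → ℂ := fun i => (1 + (ε : ℂ)) / (1 + ε - exp (2 * π * I * ((i + t) / k)))
  have hh : Function.Periodic h k := fun i => by
    simp only [h]
    rw [show 2 * π * I * ((((i + k : ℤ) : ℂ) + t) / k) = 2 * π * I * ((i + t) / k) + 2 * π * I by
      push_cast; field_simp; ring, exp_periodic]
  have hterm (j : ℕ) : starRingEnd ℂ (exp (2 * π * I * j / k)) * exp (2 * π * I * ((n + t) / k)) =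
      exp (2 * π * I * (((n - j : ℤ) + t) / k)) := by
    rw [← exp_conj, ← Complex.exp_add]
    congr 1
    simp only [map_div₀, map_mul, conj_ofReal, conj_I, map_natCast, map_ofNat]
    push_cast
    ring
  simp only [KKfun, hterm]
  congr 1
  simpa [h] using hh.sum_range_sub n

section Kernel

variable {ε : ℝ} {w : ℂ}

theorem norm_one_sub_le_norm_one_add_sub (hε : 0 ≤ ε) (hw : ‖w‖ = 1) :
    ‖1 - w‖ ≤ ‖1 + (ε : ℂ) - w‖ := by
  have hre : w.re ≤ 1 := (re_le_norm w).trans hw.le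
  have hsq : w.re * w.re + w.im * w.im = 1 := by
    rw [← normSq_apply, normSq_eq_norm_sq, hw, one_pow]
  rw [← sq_le_sq₀ (norm_nonneg _) (norm_nonneg _), ← normSq_eq_norm_sq, ← normSq_eq_norm_sq,
    normSq_apply, normSq_apply]
  simp only [sub_re, one_re, sub_im, one_im, zero_sub, mul_neg, neg_mul, neg_neg, add_re, ofReal_re,
    add_im, ofReal_im, add_zero, add_le_add_iff_right]
  nlinarith

theorem le_norm_one_add_sub (hε : 0 ≤ ε) (hw : ‖w‖ = 1) : ε ≤ ‖1 + (ε : ℂ) - w‖ := by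
  have := norm_sub_norm_le (1 + (ε : ℂ)) w
  rw [hw, show (1 + (ε : ℂ)) = ((1 + ε : ℝ) : ℂ) by push_cast; ring, norm_real, Real.norm_eq_abs,
    abs_of_nonneg (by linarith), add_sub_cancel_left] at this
  push_cast at this
  exact this

theorem norm_div_one_add_sub_le (hε0 : 0 ≤ ε) (hε1 : ε ≤ 1) {d : ℝ} (hd : 0 < d)
    (hdw : d ≤ ‖1 + (ε : ℂ) - w‖) : ‖(1 + (ε : ℂ)) / (1 + ε - w)‖ ≤ 2 / d := by
  rw [norm_div, show (1 + (ε : ℂ)) = ((1 + ε : ℝ) : ℂ) by push_cast; ring, norm_real,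
    Real.norm_eq_abs, abs_of_nonneg (by linarith)]
  calc (1 + ε) / ‖((1 + ε : ℝ) : ℂ) - w‖ ≤ 2 / ‖((1 + ε : ℝ) : ℂ) - w‖ := by
        gcongr; linarith
    _ ≤ 2 / d := by gcongr; push_cast; exact hdw

end Kernel

section TermBounds

variable {ε t : ℝ}

theorem norm_div_one_add_sub_exp_le_of_pos (hε0 : 0 < ε) (hε1 : ε ≤ 1) (x : ℝ) :
    ‖(1 + (ε : ℂ)) / (1 + ε - exp (2 * π * I * x))‖ ≤ 2 / ε :=
  norm_div_one_add_sub_le hε0.le hε1 hε0 (le_norm_one_add_sub hε0.le (norm_exp_two_pi_I_mul x))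

theorem norm_div_one_add_sub_exp_le {k j : ℕ} (hε0 : 0 ≤ ε) (hε1 : ε ≤ 1) (ht : |t| ≤ 1 / 2)
    (hj : 1 ≤ j) (hjk : j < k) :
    ‖(1 + (ε : ℂ)) / (1 + ε - exp (2 * π * I * ((j + t) / k)))‖ ≤ k / j + k / (k - j) := by
  have hj' : (1 : ℝ) ≤ j := by exact_mod_cast hj
  have hjk' : (j : ℝ) + 1 ≤ k := by exact_mod_cast hjk
  have hk : (0 : ℝ) < k := by linarith
  obtain ⟨ht0, ht1⟩ := abs_le.mp ht
  set x := (j + t) / k with hx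
  have hxk : x * k = j + t := div_mul_cancel₀ _ hk.ne'
  have hx0 : 0 < x := div_pos (by linarith) hk
  have hx1 : x < 1 := (div_lt_one hk).mpr (by linarith)
  have hd : 0 < 4 * min x (1 - x) := by
    have := lt_min hx0 (sub_pos.mpr hx1)
    positivity
  have hround : |x - round x| = min x (1 - x) := by
    rw [abs_sub_round_eq_min, Int.fract_eq_self.mpr ⟨hx0.le, hx1⟩]
  have hdist : 4 * min x (1 - x) ≤ ‖1 - exp (2 * π * I * x)‖ :=
    hround ▸ four_mul_abs_sub_round_le_norm_one_sub_exp x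
  rw [show ((j : ℂ) + t) / k = x by push_cast [hx]; rfl]
  refine (norm_div_one_add_sub_le hε0 hε1 hd
    (hdist.trans (norm_one_sub_le_norm_one_add_sub hε0 (norm_exp_two_pi_I_mul x)))).trans ?_
  have hkj : 0 ≤ (k : ℝ) / (k - j) := div_nonneg hk.le (by linarith)
  have hkj' : 0 ≤ (k : ℝ) / j := by positivity
  rcases min_cases x (1 - x) with ⟨hmin, -⟩ | ⟨hmin, -⟩ <;> rw [hmin]
  · have : 2 / (4 * x) ≤ k / j := by
      rw [div_le_div_iff₀ (by positivity) (by positivity)]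
      nlinarith
    linarith
  · have : 2 / (4 * (1 - x)) ≤ k / (k - j) := by
      rw [div_le_div_iff₀ (by linarith) (by linarith)]
      nlinarith
    linarith

end TermBounds

theorem sum_range_inv_add_inv_sub_le (m : ℕ) :
    ∑ j ∈ range m, (1 / ((j : ℝ) + 1) + 1 / ((m : ℝ) - j)) ≤ 2 * (1 + Real.log m) := by
  have hharm : ∑ j ∈ range m, 1 / ((j : ℝ) + 1) = harmonic m := by simp [harmonic]
  have hrefl : ∑ j ∈ range m, 1 / ((m : ℝ) - j) = ∑ j ∈ range m, 1 / ((j : ℝ) + 1) := by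
    rw [← sum_range_reflect]
    refine sum_congr rfl fun j hj => ?_
    have hjm := mem_range.mp hj
    rw [Nat.cast_sub (by omega), Nat.cast_sub (by omega)]
    push_cast
    ring_nf
  rw [sum_add_distrib, hrefl, hharm]
  linarith [harmonic_le_one_add_log m]

theorem sum_norm_div_one_add_sub_exp_le {k : ℕ} (hk : k ≠ 0) {ε t : ℝ} (hε0 : 0 < ε) (hε1 : ε ≤ 1)
    (ht : |t| ≤ 1 / 2) :
    ∑ j ∈ range k, ‖(1 + (ε : ℂ)) / (1 + ε - exp (2 * π * I * ((j + t) / k)))‖ ≤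
      2 / ε + 2 * k * (1 + Real.log k) := by
  obtain ⟨m, rfl⟩ := Nat.exists_eq_add_one_of_ne_zero hk
  rw [sum_range_succ']
  have h0 :
      ‖(1 + (ε : ℂ)) / (1 + ε - exp (2 * π * I * (((0 : ℕ) + t) / (m + 1 : ℕ))))‖ ≤ 2 / ε := by
    convert norm_div_one_add_sub_exp_le_of_pos hε0 hε1 (t / (m + 1)) using 6
    push_cast
    ring
  have hj : ∀ j ∈ range m,
      ‖(1 + (ε : ℂ)) / (1 + ε - exp (2 * π * I * (((j + 1 : ℕ) + t) / (m + 1 : ℕ))))‖ ≤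
        (m + 1) * (1 / ((j : ℝ) + 1) + 1 / ((m : ℝ) - j)) := by
    intro j hj
    have := norm_div_one_add_sub_exp_le hε0.le hε1 ht (Nat.le_add_left 1 j)
      (Nat.add_lt_add_right (mem_range.mp hj) 1)
    convert this using 1
    push_cast
    ring
  have hlog : Real.log m ≤ Real.log (m + 1 : ℕ) := by
    rcases m.eq_zero_or_pos with rfl | hm
    · simp
    · exact log_le_log (by positivity) (by push_cast; linarith)
  calc _ ≤ (m + 1) * ∑ j ∈ range m, (1 / ((j : ℝ) + 1) + 1 / ((m : ℝ) - j)) + 2 / ε := by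
        rw [mul_sum]
        exact add_le_add (sum_le_sum hj) h0
    _ ≤ (m + 1) * (2 * (1 + Real.log m)) + 2 / ε := by
        gcongr
        exact sum_range_inv_add_inv_sub_le m
    _ ≤ 2 / ε + 2 * (m + 1 : ℕ) * (1 + Real.log (m + 1 : ℕ)) := by
        push_cast at hlog ⊢
        nlinarith

/-- There is an absolute constant `C > 0` such that, for every integer `k ≥ 2`, every
`ε ∈ (0,1)` and every `z` on the unit circle, `|f(z)| ≤ C (1/(kε) + log k + 1)`. -/
theorem KKfun_abs_upper_bound :
    ∃ C : ℝ, 0 < C ∧ ∀ (k : ℕ), 2 ≤ k → ∀ ε ∈ Set.Ioo (0:ℝ) 1, ∀ z : ℂ, ‖z‖ = 1 →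
      ‖KKfun k ε z‖ ≤ C * (1 / (k * ε) + Real.log k + 1) := by
  refine ⟨2, two_pos, fun k hk ε ⟨hε0, hε1⟩ z hz => ?_⟩
  have hk0 : k ≠ 0 := by omega
  obtain ⟨n, t, ht, rfl⟩ := exists_eq_exp_two_pi_I_mul_div hz hk0
  rw [KKfun_exp_eq hk0, norm_mul, norm_div, norm_one, Complex.norm_natCast]
  calc 1 / (k : ℝ) * ‖∑ j ∈ range k, _‖
      ≤ 1 / k * (2 / ε + 2 * k * (1 + Real.log k)) := by
        gcongr
        exact (norm_sum_le _ _).trans (sum_norm_div_one_add_sub_exp_le hk0 hε0 hε1.le ht)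
    _ = 2 * (1 / (k * ε) + Real.log k + 1) := by
        field_simp
        ring
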